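/- If μ₁, ..., μₙ ∈ [0,1] with n ≥ 2, μₙ < 1/n and μ₁ > 1/n, then (1 − μₙ)² + Σ_{i=1}^{n−1} μᵢ² > Σ_{i=1}^{n} (1/n − μᵢ)². -/

import Mathlib

open Finset

/-!
With `c = 1/n` and `S = μ₁ + ⋯ + μₙ₋₁`, the difference of the two sides equals
`(1 - c)(1 - 2μₙ) + 2cS`, because `(n - 1)c² = c(1 - c)`. Both terms are nonnegative and the
first is positive since `μₙ < c ≤ 1/2`.
-/

theorem Finset.sum_sq_sub_sum_sub_sq {ι : Type*} (s : Finset ι) (f : ι → ℝ) (c : ℝ) :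
    ∑ i ∈ s, f i ^ 2 - ∑ i ∈ s, (c - f i) ^ 2 = 2 * c * ∑ i ∈ s, f i - #s * c ^ 2 := by
  rw [← sum_sub_distrib, mul_sum, ← nsmul_eq_mul, ← sum_const, ← sum_sub_distrib]
  exact sum_congr rfl fun i _ => by ring

theorem explore_concentrated_gt_uniform_general
    (n : ℕ) (hn : 2 ≤ n) (μ : ℕ → ℝ)
    (hrange : ∀ i ∈ Icc 1 n, μ i ∈ Set.Icc (0 : ℝ) 1)
    (hlast : μ n < 1 / n) :
    (1 - μ n) ^ 2 + ∑ i ∈ Icc 1 (n - 1), (μ i) ^ 2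
      > ∑ i ∈ Icc 1 n, (1 / n - μ i) ^ 2 := by
  obtain ⟨m, rfl⟩ : ∃ m, n = m + 1 := ⟨n - 1, by omega⟩
  set c : ℝ := 1 / (m + 1 : ℕ)
  have hc : (m : ℝ) * c = 1 - c := by
    simp only [c]; field_simp; push_cast; ring
  have hc_half : c ≤ 1 / 2 := by
    simp only [c]; gcongr; exact_mod_cast hn
  have hS : 0 ≤ ∑ i ∈ Icc 1 m, μ i :=
    sum_nonneg fun i hi => (hrange i (Icc_subset_Icc_right m.le_succ hi)).1
  have hdiff := sum_sq_sub_sum_sub_sq (Icc 1 m) μ c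
  rw [Nat.card_Icc, Nat.add_sub_cancel] at hdiff
  rw [sum_Icc_succ_top (by omega), Nat.add_sub_cancel]
  have hpos : 0 < (1 - c) * (1 - 2 * μ (m + 1)) := mul_pos (by linarith) (by linarith)
  have hnonneg : 0 ≤ 2 * c * ∑ i ∈ Icc 1 m, μ i := by positivity
  clear_value c -- otherwise `ring` unfolds `c`
  linear_combination hpos + hnonneg - hdiff + c * hc

/-- Key inequality of the diversity–fairness trade-off: if `μ₁,…,μₙ ∈ [0,1]`,
`n ≥ 2`, `μₙ < 1/n` and `μ₁ > 1/n`, then the squared Euclidean distance from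
`(μ₁,…,μₙ)` to `(0,…,0,1)` exceeds that to the uniform vector `(1/n,…,1/n)`. -/
theorem explore_concentrated_gt_uniform
    (n : ℕ) (hn : 2 ≤ n) (μ : ℕ → ℝ)
    (hrange : ∀ i ∈ Icc 1 n, μ i ∈ Set.Icc (0 : ℝ) 1)
    (hlast : μ n < 1 / n) (hfirst : μ 1 > 1 / n) :
    (1 - μ n) ^ 2 + ∑ i ∈ Icc 1 (n - 1), (μ i) ^ 2
      > ∑ i ∈ Icc 1 n, (1 / n - μ i) ^ 2 :=
  explore_concentrated_gt_uniform_general n hn μ hrange hlast
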